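/- Let I and X be compact metric spaces and {f_t}_{t∈I} a near-isotopy of X; write f̂_t for the natural extension of f_t on lim(X,f_t). Then for every ε > 0 there exist homeomorphisms h_t : lim(X,f_t) → X, one for each t ∈ I, such that: (a) the map X×I → X, (x,t) ↦ h_t(f̂_t(h_t^{-1}(x))), is continuous, so that {h_t ∘ f̂_t ∘ h_t^{-1}}_{t∈I} is a continuous family of homeomorphisms of X; and (b) d(h_t(x), x₀) < ε for every t ∈ I and every x = (x₀,x₁,…) ∈ lim(X,f_t). -/

import Mathlib

/-- The inverse limit `lim(X,f) = {x ∈ X^ℕ : f (x (i+1)) = x i}`. -/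
def InvLim {X : Type*} (f : X → X) : Set (ℕ → X) :=
  {x | ∀ i, f (x (i + 1)) = x i}

/-- The natural extension `f̂ : lim(X,f) → lim(X,f)`, `f̂(x) = (f x₀, x₀, x₁, …)`. -/
def natExt {X : Type*} (f : X → X) (x : InvLim f) : InvLim f :=
  ⟨fun i => Nat.rec (f (x.val 0)) (fun n _ => x.val n) i, fun i => by
    cases i with
    | zero => rfl
    | succ n => exact x.property n⟩

/-!
Brown's argument, run uniformly in the parameter. Choose continuous families of homeomorphisms
`g_n` approximating `f` ever more closely and put `F_n = g_1 ∘ ⋯ ∘ g_n`. If each `g_{n+1}` is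
close enough to `f` relative to the moduli of continuity of `F_n` and of the iterates
`f^k ∘ F_n⁻¹` (`k ≤ n`), then `Φ(x) = lim F_n(x_n)` exists for `x ∈ lim(X,f_t)`, the maps
`z ↦ lim_n f^n(F_{i+n}⁻¹ z)` are the coordinates of its inverse, and all limits are uniform in
`(x, t)`. Conjugating `f̂_t` by `Φ_t` then gives a family continuous in `(x, t)`, and
`d(Φ(x), x₀) = d(lim F_n(x_n), F_0(x_0))` is at most twice the first step size.
-/

open Filter Topology

section Halving

variable {Y : Type*} [PseudoMetricSpace Y] {B : ℕ → ℝ}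

theorem le_div_two_pow_of_le_half (hB : ∀ n, B (n + 1) ≤ B n / 2) (n k : ℕ) :
    B (n + k) ≤ B n / 2 ^ k := by
  induction k with
  | zero => simp
  | succ k ih =>
    calc B (n + (k + 1)) ≤ B (n + k) / 2 := hB (n + k)
      _ ≤ B n / 2 ^ k / 2 := by gcongr
      _ = B n / 2 ^ (k + 1) := by rw [pow_succ, div_div]

theorem tendsto_div_two_pow (C : ℝ) : Tendsto (fun n : ℕ => C / 2 ^ n) atTop (𝓝 0) :=
  tendsto_const_nhds.div_atTop (tendsto_pow_atTop_atTop_of_one_lt one_lt_two)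

variable {u : ℕ → Y}

theorem cauchySeq_of_dist_le_of_le_half (hB : ∀ n, B (n + 1) ≤ B n / 2)
    (hd : ∀ n, dist (u n) (u (n + 1)) ≤ B n) : CauchySeq u :=
  cauchySeq_of_le_geometric_two (C := 2 * B 0) fun n =>
    (hd n).trans (by simpa using le_div_two_pow_of_le_half hB 0 n)

theorem dist_le_two_mul_of_le_half (hB : ∀ n, B (n + 1) ≤ B n / 2)
    (hd : ∀ n, dist (u n) (u (n + 1)) ≤ B n) {a : Y} (ha : Tendsto u atTop (𝓝 a)) (n : ℕ) :
    dist (u n) a ≤ 2 * B n :=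
  dist_le_of_le_geometric_two_of_tendsto₀ (f := fun k => u (n + k))
    (fun k => (hd (n + k)).trans (by simpa using le_div_two_pow_of_le_half hB n k))
    ((ha.comp (tendsto_add_atTop_nat n)).congr fun k => by rw [Function.comp_apply, add_comm])

theorem tendsto_limUnder_of_dist_le_of_le_half [CompleteSpace Y] [Nonempty Y]
    (hB : ∀ n, B (n + 1) ≤ B n / 2) (hd : ∀ n, dist (u n) (u (n + 1)) ≤ B n) :
    Tendsto u atTop (𝓝 (limUnder atTop u)) :=
  (cauchySeq_of_dist_le_of_le_half hB hd).tendsto_limUnder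

theorem continuous_of_tendsto_of_dist_le_of_le_half {α : Type*} [TopologicalSpace α]
    {u : ℕ → α → Y} {φ : α → Y} (hu : ∀ n, Continuous (u n)) (hB : ∀ n, B (n + 1) ≤ B n / 2)
    (hd : ∀ n a, dist (u n a) (u (n + 1) a) ≤ B n)
    (hφ : ∀ a, Tendsto (u · a) atTop (𝓝 (φ a))) : Continuous φ := by
  refine TendstoUniformly.continuous (F := u) (p := atTop) ?_ (Frequently.of_forall hu)
  rw [Metric.tendstoUniformly_iff]
  intro η hη
  filter_upwards [(tendsto_div_two_pow (2 * B 0)).eventually (gt_mem_nhds hη)] with n hn a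
  calc dist (φ a) (u n a)
      ≤ 2 * B n := dist_comm (u n a) _ ▸ dist_le_two_mul_of_le_half hB (hd · a) (hφ a) n
    _ ≤ 2 * (B 0 / 2 ^ n) := by gcongr; simpa using le_div_two_pow_of_le_half hB 0 n
    _ < η := by rwa [mul_div_assoc']

end Halving

theorem InvLim.iterate_apply {X : Type*} {g : X → X} {x : ℕ → X} (hx : x ∈ InvLim g) (k i : ℕ) :
    g^[k] (x (i + k)) = x i := by
  induction k with
  | zero => rfl
  | succ k ih => rw [Function.iterate_succ_apply, ← add_assoc, hx, ih]

section Family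

variable {X I : Type*} [TopologicalSpace X] [TopologicalSpace I]

theorem continuous_symm_of_continuous_family [CompactSpace X] [CompactSpace I] [T2Space X]
    [T2Space I] {h : I → X ≃ₜ X} (hh : Continuous fun p : X × I => h p.2 p.1) :
    Continuous fun p : X × I => (h p.2).symm p.1 := by
  let e : X × I ≃ X × I :=
    { toFun := fun p => (h p.2 p.1, p.2)
      invFun := fun p => ((h p.2).symm p.1, p.2)
      left_inv := fun p => by simp
      right_inv := fun p => by simp }
  exact ((hh.prodMk continuous_snd).continuous_symm_of_equiv_compact_to_t2 (f := e)).fst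

theorem continuous_iterate_family {f : X × I → X} (hf : Continuous f) (k : ℕ) :
    Continuous fun p : X × I => (fun x => f (x, p.2))^[k] p.1 := by
  induction k with
  | zero => exact continuous_fst
  | succ k ih =>
    simp only [Function.iterate_succ_apply']
    exact hf.comp (ih.prodMk continuous_snd)

def paramInvLim (f : X × I → X) : Set ((ℕ → X) × I) :=
  {q | q.1 ∈ InvLim fun x => f (x, q.2)}

theorem continuous_natExt_family {f : X × I → X} (hf : Continuous f) {Ψ : X × I → ℕ → X}
    (hΨ : Continuous Ψ) (hΨmem : ∀ p : X × I, Ψ p ∈ InvLim fun x => f (x, p.2)) :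
    Continuous fun p : X × I => (natExt (fun x => f (x, p.2)) ⟨Ψ p, hΨmem p⟩).1 := by
  refine continuous_pi fun i => ?_
  cases i with
  | zero => exact hf.comp (((continuous_apply 0).comp hΨ).prodMk continuous_snd)
  | succ i => exact (continuous_apply i).comp hΨ

theorem exists_homeomorph_family_natExt_conj_continuous {f : X × I → X} (hf : Continuous f)
    {Φ : paramInvLim f → X} (hΦ : Continuous Φ) {Ψ : X × I → ℕ → X} (hΨ : Continuous Ψ)
    (hΨmem : ∀ p : X × I, Ψ p ∈ InvLim fun x => f (x, p.2))
    (hΦΨ : ∀ p : X × I, Φ ⟨(Ψ p, p.2), hΨmem p⟩ = p.1) (hΨΦ : ∀ q, Ψ (Φ q, q.1.2) = q.1.1) :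
    ∃ h : (t : I) → (InvLim (fun x => f (x, t)) ≃ₜ X),
      Continuous (fun p : X × I =>
        h p.2 (natExt (fun x => f (x, p.2)) ((h p.2).symm p.1))) ∧
      ∀ t x, h t x = Φ ⟨(x.1, t), x.2⟩ := by
  let h t : InvLim (fun x => f (x, t)) ≃ₜ X :=
    { toFun x := Φ ⟨(x.1, t), x.2⟩
      invFun z := ⟨Ψ (z, t), hΨmem (z, t)⟩
      left_inv x := Subtype.ext (hΨΦ ⟨(x.1, t), x.2⟩)
      right_inv z := hΦΨ (z, t)
      continuous_toFun := hΦ.comp <|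
        (continuous_subtype_val.prodMk continuous_const).subtype_mk fun x => x.2
      continuous_invFun := (hΨ.comp (continuous_id.prodMk continuous_const)).subtype_mk _ }
  refine ⟨h, ?_, fun _ _ => rfl⟩
  have hext := continuous_natExt_family hf hΨ hΨmem
  exact hΦ.comp ((hext.prodMk continuous_snd).subtype_mk fun p => (natExt _ ⟨Ψ p, hΨmem p⟩).2)

end Family

section Brown

variable {X I : Type*} [MetricSpace X] [MetricSpace I]

def IsNearIsotopy (f : X × I → X) : Prop :=
  ∀ ε > (0 : ℝ), ∃ h : I → X ≃ₜ X,
    Continuous (fun p : X × I => h p.2 p.1) ∧ ∀ p : X × I, dist (h p.2 p.1) (f p) < ε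

theorem exists_pos_forall_dist_le_of_continuous [CompactSpace X] [CompactSpace I]
    {Y : Type*} [PseudoMetricSpace Y] {G : X × I → Y} (hG : Continuous G) {η : ℝ} (hη : 0 < η) :
    ∃ δ > 0, ∀ t a b, dist a b ≤ δ → dist (G (a, t)) (G (b, t)) ≤ η := by
  obtain ⟨δ, hδ, hG⟩ :=
    Metric.uniformContinuous_iff.1 (CompactSpace.uniformContinuous_of_continuous hG) η hη
  refine ⟨δ / 2, half_pos hδ, fun t a b hab => (hG ?_).le⟩
  rw [Prod.dist_eq, dist_self, max_eq_left dist_nonneg]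
  linarith

theorem exists_pos_forall_dist_le_of_continuous_of_le [CompactSpace X] [CompactSpace I]
    {Y : Type*} [PseudoMetricSpace Y] {G : ℕ → X × I → Y} (hG : ∀ k, Continuous (G k)) (n : ℕ)
    {η : ℝ} (hη : 0 < η) :
    ∃ δ > 0, ∀ t a b, dist a b ≤ δ → ∀ k ≤ n, dist (G k (a, t)) (G k (b, t)) ≤ η := by
  obtain ⟨δ, hδ, hGδ⟩ := exists_pos_forall_dist_le_of_continuous
    (G := fun p (k : Fin (n + 1)) => G k p) (continuous_pi fun k => hG k) hη
  exact ⟨δ, hδ, fun t a b hab k hk =>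
    (dist_le_pi_dist _ _ ⟨k, Nat.lt_succ_of_le hk⟩).trans (hGδ t a b hab)⟩

/-- A stage of Brown's construction: the composite `F = g_1 ∘ ⋯ ∘ g_n` of the homeomorphisms
chosen so far, with the step sizes `α`, `β` that the next stage must respect. -/
structure BrownStage (X I : Type*) [TopologicalSpace X] [TopologicalSpace I] where
  F : I → X ≃ₜ X
  continuous_F : Continuous fun p : X × I => F p.2 p.1
  α : ℝ
  β : ℝ
  α_pos : 0 < α
  β_pos : 0 < β

/-- `s'` may follow `s` at stage `n`. The first two distance bounds make `F_n(x_n)` and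
`f^k(F_{i+k}⁻¹ z)` converge; the last two are moduli of continuity of `f^k ∘ F_n⁻¹` and `F_n`
which force the two limits to be mutually inverse. -/
structure IsBrownStep (f : X × I → X) (n : ℕ) (s s' : BrownStage X I) : Prop where
  β_le : s'.β ≤ s.β / 2
  α_le : s'.α ≤ s.α / 2
  dist_F_le : ∀ t y, dist (s.F t (f (y, t))) (s'.F t y) ≤ s'.β
  dist_iterate_symm_le : ∀ t z, ∀ k ≤ n,
    dist ((fun x => f (x, t))^[k] ((s.F t).symm z))
      ((fun x => f (x, t))^[k + 1] ((s'.F t).symm z)) ≤ s'.α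
  dist_iterate_symm_le_of_dist_le : ∀ t a b, dist a b ≤ 2 * s'.β → ∀ k ≤ n,
    dist ((fun x => f (x, t))^[k] ((s.F t).symm a))
      ((fun x => f (x, t))^[k] ((s.F t).symm b)) ≤ 1 / 2 ^ n
  dist_F_le_of_dist_le : ∀ t a b, dist a b ≤ 2 * s'.α → dist (s.F t a) (s.F t b) ≤ 1 / 2 ^ n

variable {f : X × I → X}

theorem exists_isBrownStep [CompactSpace X] [CompactSpace I] (hf : Continuous f)
    (hNI : IsNearIsotopy f) (n : ℕ) (s : BrownStage X I) : ∃ s', IsBrownStep f n s s' := by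
  have hη : (0 : ℝ) < 1 / 2 ^ n := by positivity
  obtain ⟨ρ, hρ, hFρ⟩ := exists_pos_forall_dist_le_of_continuous s.continuous_F hη
  obtain ⟨σ, hσ, hFσ⟩ := exists_pos_forall_dist_le_of_continuous_of_le
    (G := fun k p => (fun x => f (x, p.2))^[k] ((s.F p.2).symm p.1))
    (fun k => (continuous_iterate_family hf k).comp
      ((continuous_symm_of_continuous_family s.continuous_F).prodMk continuous_snd)) n hη
  have hα : 0 < min (s.α / 2) (ρ / 2) := lt_min (half_pos s.α_pos) (half_pos hρ)
  have hβ : 0 < min (s.β / 2) (σ / 2) := lt_min (half_pos s.β_pos) (half_pos hσ)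
  obtain ⟨δF, hδF, hFδ⟩ := exists_pos_forall_dist_le_of_continuous s.continuous_F hβ
  obtain ⟨δf, hδf, hfδ⟩ :=
    exists_pos_forall_dist_le_of_continuous_of_le (continuous_iterate_family hf) n hα
  obtain ⟨g, hg, hgf⟩ := hNI (min δF δf) (lt_min hδF hδf)
  have hgf' t y : dist (f (y, t)) (g t y) ≤ min δF δf := by
    rw [dist_comm]; exact (hgf (y, t)).le
  refine ⟨⟨fun t => (g t).trans (s.F t), s.continuous_F.comp (hg.prodMk continuous_snd),
    _, _, hα, hβ⟩, min_le_left _ _, min_le_left _ _, fun t y => ?_, fun t z k hk => ?_,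
    fun t a b hab => hFσ t a b (by linarith [min_le_right (s.β / 2) (σ / 2)]),
    fun t a b hab => hFρ t a b (by linarith [min_le_right (s.α / 2) (ρ / 2)])⟩
  · exact hFδ t _ _ ((hgf' t y).trans (min_le_left _ _))
  · -- `f^[k+1] (g⁻¹ w) = f^[k] (f (g⁻¹ w))` and `f (g⁻¹ w)` is close to `g (g⁻¹ w) = w`
    have hw := hgf' t ((g t).symm ((s.F t).symm z))
    rw [Homeomorph.apply_symm_apply] at hw
    rw [dist_comm, Function.iterate_succ_apply]
    exact hfδ t _ _ (hw.trans (min_le_right _ _)) k hk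

theorem exists_brownStage_seq [CompactSpace X] [CompactSpace I] (hf : Continuous f)
    (hNI : IsNearIsotopy f) {β₀ : ℝ} (hβ₀ : 0 < β₀) :
    ∃ c : ℕ → BrownStage X I, (∀ t, (c 0).F t = Homeomorph.refl X) ∧ (c 0).β = β₀ ∧
      ∀ n, IsBrownStep f n (c n) (c (n + 1)) := by
  choose next hnext using exists_isBrownStep hf hNI
  let c₀ : BrownStage X I := ⟨fun _ => Homeomorph.refl X, continuous_fst, 1, β₀, one_pos, hβ₀⟩
  exact ⟨fun n => Nat.rec c₀ next n, fun _ => rfl, rfl, fun n => hnext n _⟩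

end Brown

section BrownLimit

variable {X I : Type*} [MetricSpace X] [MetricSpace I] {f : X × I → X}

noncomputable def brownMap (c : ℕ → BrownStage X I) (q : paramInvLim f) : X :=
  haveI : Nonempty X := ⟨q.1.1 0⟩
  limUnder atTop fun n => (c n).F q.1.2 (q.1.1 n)

/-- The `i`-th coordinate of the inverse of `brownMap c`. -/
noncomputable def brownInv (f : X × I → X) (c : ℕ → BrownStage X I) (i : ℕ) (p : X × I) : X :=
  haveI : Nonempty X := ⟨p.1⟩
  limUnder atTop fun n => (fun x => f (x, p.2))^[n] (((c (i + n)).F p.2).symm p.1)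

variable {c : ℕ → BrownStage X I} (hc : ∀ n, IsBrownStep f n (c n) (c (n + 1)))
include hc

theorem dist_brownMap_succ_le (n : ℕ) (q : paramInvLim f) :
    dist ((c n).F q.1.2 (q.1.1 n)) ((c (n + 1)).F q.1.2 (q.1.1 (n + 1))) ≤ (c (n + 1)).β := by
  rw [← q.2 n]
  exact (hc n).dist_F_le _ _

theorem dist_brownInv_succ_le (i n : ℕ) (p : X × I) :
    dist ((fun x => f (x, p.2))^[n] (((c (i + n)).F p.2).symm p.1))
      ((fun x => f (x, p.2))^[n + 1] (((c (i + (n + 1))).F p.2).symm p.1)) ≤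
        (c (i + n + 1)).α :=
  (hc (i + n)).dist_iterate_symm_le p.2 p.1 n (Nat.le_add_left n i)

section Complete

variable [CompleteSpace X]

theorem tendsto_brownMap (q : paramInvLim f) :
    Tendsto (fun n => (c n).F q.1.2 (q.1.1 n)) atTop (𝓝 (brownMap c q)) :=
  haveI : Nonempty X := ⟨q.1.1 0⟩
  tendsto_limUnder_of_dist_le_of_le_half (fun n => (hc (n + 1)).β_le)
    (dist_brownMap_succ_le hc · q)

theorem dist_brownMap_le (q : paramInvLim f) (n : ℕ) :
    dist ((c n).F q.1.2 (q.1.1 n)) (brownMap c q) ≤ 2 * (c (n + 1)).β :=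
  dist_le_two_mul_of_le_half (fun n => (hc (n + 1)).β_le) (dist_brownMap_succ_le hc · q)
    (tendsto_brownMap hc q) n

theorem continuous_brownMap : Continuous (brownMap (f := f) c) :=
  continuous_of_tendsto_of_dist_le_of_le_half (u := fun n q => (c n).F q.1.2 (q.1.1 n))
    (fun n => (c n).continuous_F.comp (f := fun q : paramInvLim f => (q.1.1 n, q.1.2))
      (by fun_prop))
    (fun n => (hc (n + 1)).β_le)
    (dist_brownMap_succ_le hc) (tendsto_brownMap hc)

theorem tendsto_brownInv (i : ℕ) (p : X × I) :
    Tendsto (fun n => (fun x => f (x, p.2))^[n] (((c (i + n)).F p.2).symm p.1)) atTop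
      (𝓝 (brownInv f c i p)) :=
  haveI : Nonempty X := ⟨p.1⟩
  tendsto_limUnder_of_dist_le_of_le_half (fun n => (hc (i + n + 1)).α_le)
    (dist_brownInv_succ_le hc i · p)

theorem dist_brownInv_le (i : ℕ) (p : X × I) (n : ℕ) :
    dist ((fun x => f (x, p.2))^[n] (((c (i + n)).F p.2).symm p.1)) (brownInv f c i p) ≤
      2 * (c (i + n + 1)).α :=
  dist_le_two_mul_of_le_half (fun n => (hc (i + n + 1)).α_le) (dist_brownInv_succ_le hc i · p)
    (tendsto_brownInv hc i p) n

theorem continuous_brownInv [CompactSpace X] [CompactSpace I] (hf : Continuous f) (i : ℕ) :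
    Continuous (brownInv f c i) :=
  continuous_of_tendsto_of_dist_le_of_le_half
    (fun n => (continuous_iterate_family hf n).comp
      ((continuous_symm_of_continuous_family (c (i + n)).continuous_F).prodMk continuous_snd))
    (fun n => (hc (i + n + 1)).α_le) (dist_brownInv_succ_le hc i) (tendsto_brownInv hc i)

theorem brownInv_mem_invLim (hf : Continuous f) (p : X × I) :
    (fun i => brownInv f c i p) ∈ InvLim fun x => f (x, p.2) := by
  intro i
  have hlim : Tendsto (fun n => f ((fun x => f (x, p.2))^[n]
      (((c (i + 1 + n)).F p.2).symm p.1), p.2)) atTop (𝓝 (f (brownInv f c (i + 1) p, p.2))) :=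
    (hf.tendsto _).comp ((tendsto_brownInv hc (i + 1) p).prodMk_nhds tendsto_const_nhds)
  refine tendsto_nhds_unique hlim (((tendsto_brownInv hc i p).comp
    (tendsto_add_atTop_nat 1)).congr fun n => ?_)
  rw [Function.comp_apply, Function.iterate_succ_apply', Nat.add_right_comm]
  rfl

theorem brownMap_brownInv (hf : Continuous f) (p : X × I) :
    brownMap c ⟨(fun i => brownInv f c i p, p.2), brownInv_mem_invLim hc hf p⟩ = p.1 := by
  refine tendsto_nhds_unique (tendsto_brownMap hc _) (tendsto_iff_dist_tendsto_zero.2 <|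
    squeeze_zero (fun _ => dist_nonneg) (fun n => ?_)
      (tendsto_div_two_pow 1))
  have h : dist ((c n).F p.2 (brownInv f c n p)) ((c n).F p.2 (((c n).F p.2).symm p.1)) ≤
      1 / 2 ^ n :=
    (hc n).dist_F_le_of_dist_le p.2 _ _ ((dist_comm _ _).trans_le (dist_brownInv_le hc n p 0))
  rwa [Homeomorph.apply_symm_apply] at h

theorem brownInv_brownMap (q : paramInvLim f) (i : ℕ) :
    brownInv f c i (brownMap c q, q.1.2) = q.1.1 i := by
  refine tendsto_nhds_unique (tendsto_brownInv hc i _) (tendsto_iff_dist_tendsto_zero.2 <|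
    squeeze_zero (fun _ => dist_nonneg) (fun n => ?_)
      (tendsto_div_two_pow 1))
  have h := (hc (i + n)).dist_iterate_symm_le_of_dist_le q.1.2 _ _
    (dist_comm (brownMap c q) _ ▸ dist_brownMap_le hc q (i + n)) n (Nat.le_add_left n i)
  rw [Homeomorph.symm_apply_apply, InvLim.iterate_apply q.2] at h
  exact h.trans (by gcongr; exacts [one_le_two, Nat.le_add_left n i])

end Complete

end BrownLimit

/-- Parameterized Brown corollary: for a near-isotopy `{f_t}_{t∈I}` of a compact metric
space `X` and any `ε > 0`, there are homeomorphisms `h_t : lim(X,f_t) → X` such that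
`(x,t) ↦ h_t (f̂_t (h_t⁻¹ x))` is continuous (so `{h_t ∘ f̂_t ∘ h_t⁻¹}` is a continuous
family of homeomorphisms of `X`), and `dist (h_t x) x₀ < ε` for every `t` and every
`x = (x₀,x₁,…) ∈ lim(X,f_t)`. -/
theorem parameterized_brown_corollary {X I : Type*}
    [MetricSpace X] [CompactSpace X] [MetricSpace I] [CompactSpace I]
    (f : X × I → X) (hf : Continuous f)
    (hNI : ∀ ε > (0 : ℝ), ∃ h : I → X ≃ₜ X,
        Continuous (fun p : X × I => h p.2 p.1) ∧
        ∀ p : X × I, dist (h p.2 p.1) (f p) < ε)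
    (ε : ℝ) (hε : 0 < ε) :
    ∃ h : (t : I) → (InvLim (fun x => f (x, t)) ≃ₜ X),
      Continuous (fun p : X × I =>
        h p.2 (natExt (fun x => f (x, p.2)) ((h p.2).symm p.1))) ∧
      ∀ (t : I) (x : InvLim (fun x => f (x, t))), dist (h t x) (x.val 0) < ε := by
  obtain ⟨c, hc₀F, hc₀β, hc⟩ := exists_brownStage_seq hf hNI (half_pos hε)
  obtain ⟨h, hconj, hh⟩ := exists_homeomorph_family_natExt_conj_continuous hf
    (continuous_brownMap hc) (continuous_pi (continuous_brownInv hc hf))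
    (brownInv_mem_invLim hc hf) (brownMap_brownInv hc hf)
    (fun q => funext (brownInv_brownMap hc q))
  refine ⟨h, hconj, fun t x => ?_⟩
  calc dist (h t x) (x.1 0)
      = dist ((c 0).F t (x.1 0)) (brownMap c ⟨(x.1, t), x.2⟩) := by
        rw [hh, hc₀F, dist_comm]; rfl
    _ ≤ 2 * (c 1).β := dist_brownMap_le hc ⟨(x.1, t), x.2⟩ 0
    _ ≤ ε / 2 := by linarith [(hc 0).β_le, hc₀β]
    _ < ε := half_lt_self hε
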